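/- Fuzzy parallelogram inequality: Let X be a complex inner product space, f : X → X → ℂ, and A, B real constants with 0 < A ≤ B such that for all x, y ∈ X: A·|⟨x,y⟩| ≤ |f x y| ≤ B·|⟨x,y⟩|. Then for all x, y ∈ X: (2A/B)·(|f x x| + |f y y|) ≤ |f (x+y) (x+y)| + |f (x−y) (x−y)| ≤ (2B/A)·(|f x x| + |f y y|). -/

import Mathlib

/-! Writing `g x = ‖f x x‖`, the hypothesis squeezes `g` between `A ‖x‖²` and `B ‖x‖²`. The
parallelogram law `‖x + y‖² + ‖x - y‖² = 2 (‖x‖² + ‖y‖²)` then transfers from the squared norm to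
`g` at the cost of the ratio `B / A` in either direction. -/

open scoped InnerProductSpace

section Squeeze

variable {𝕜 E : Type*} [RCLike 𝕜] [NormedAddCommGroup E] [InnerProductSpace 𝕜 E]
  {g : E → ℝ} {A B : ℝ}

include 𝕜

lemma parallelogram_lower_of_squeeze (hA : 0 ≤ A) (hB : 0 < B)
    (hg : ∀ x, A * ‖x‖ ^ 2 ≤ g x ∧ g x ≤ B * ‖x‖ ^ 2) (x y : E) :
    2 * A / B * (g x + g y) ≤ g (x + y) + g (x - y) :=
  calc 2 * A / B * (g x + g y) = 2 * A * (g x / B + g y / B) := by ring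
    _ ≤ 2 * A * (‖x‖ ^ 2 + ‖y‖ ^ 2) := by
      gcongr <;> exact (div_le_iff₀' hB).2 (hg _).2
    _ = A * ‖x + y‖ ^ 2 + A * ‖x - y‖ ^ 2 := by
      rw [← mul_add, parallelogram_law_with_norm 𝕜]; ring
    _ ≤ g (x + y) + g (x - y) := add_le_add (hg _).1 (hg _).1

lemma parallelogram_upper_of_squeeze (hA : 0 < A) (hB : 0 ≤ B)
    (hg : ∀ x, A * ‖x‖ ^ 2 ≤ g x ∧ g x ≤ B * ‖x‖ ^ 2) (x y : E) :
    g (x + y) + g (x - y) ≤ 2 * B / A * (g x + g y) :=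
  calc g (x + y) + g (x - y) ≤ B * ‖x + y‖ ^ 2 + B * ‖x - y‖ ^ 2 := add_le_add (hg _).2 (hg _).2
    _ = 2 * B * (‖x‖ ^ 2 + ‖y‖ ^ 2) := by
      rw [← mul_add, parallelogram_law_with_norm 𝕜]; ring
    _ ≤ 2 * B * (g x / A + g y / A) := by
      gcongr <;> exact (le_div_iff₀' hA).2 (hg _).1
    _ = 2 * B / A * (g x + g y) := by ring

end Squeeze

lemma norm_inner_self_eq_norm_sq {𝕜 E : Type*} [RCLike 𝕜] [NormedAddCommGroup E]
    [InnerProductSpace 𝕜 E] (x : E) : ‖⟪x, x⟫_𝕜‖ = ‖x‖ ^ 2 :=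
  (inner_self_re_eq_norm x).symm.trans (inner_self_eq_norm_sq x)

/-- Fuzzy parallelogram inequality. -/
theorem fuzzy_parallelogram {X : Type*} [NormedAddCommGroup X]
    [InnerProductSpace ℂ X] (f : X → X → ℂ) (A B : ℝ)
    (hA : 0 < A) (hAB : A ≤ B)
    (hf : ∀ x y : X, A * ‖⟪x, y⟫_ℂ‖ ≤ ‖f x y‖ ∧
      ‖f x y‖ ≤ B * ‖⟪x, y⟫_ℂ‖) :
    ∀ x y : X,
      (2 * A / B) * (‖f x x‖ + ‖f y y‖) ≤
        ‖f (x + y) (x + y)‖ + ‖f (x - y) (x - y)‖ ∧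
      ‖f (x + y) (x + y)‖ + ‖f (x - y) (x - y)‖ ≤
        (2 * B / A) * (‖f x x‖ + ‖f y y‖) := by
  have hsq : ∀ x : X, A * ‖x‖ ^ 2 ≤ ‖f x x‖ ∧ ‖f x x‖ ≤ B * ‖x‖ ^ 2 := fun x => by
    simpa only [norm_inner_self_eq_norm_sq] using hf x x
  have hB : 0 < B := hA.trans_le hAB
  exact fun x y => ⟨parallelogram_lower_of_squeeze (𝕜 := ℂ) hA.le hB hsq x y,
    parallelogram_upper_of_squeeze (𝕜 := ℂ) hA hB.le hsq x y⟩
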